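/- For every \(d \ge 2\) and \(n > d\), we have \(\varphi_d(n) \le \varphi_{d-1}(n-1) + \varphi_d(n-1)\). -/

import Mathlib

/-!
Fix a point `v` of an `(n+1)`-set. Given a `d+1`-partition, either `v` forms a part on its own,
and then the other `d` parts partition the remaining `n` points, so some member of a `d`-blocking
set on them, extended by `v`, meets every part; or every part still meets the remaining `n`
points after deleting `v`, and a member of a `(d+1)`-blocking set on them does the job.
-/

/-- A `d`-partition of a finite set `V`: `d` pairwise disjoint nonempty parts whose union is `V`. -/
def IsDPartition {α : Type*} [DecidableEq α] (d : ℕ) (V : Finset α)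
    (P : Fin d → Finset α) : Prop :=
  (∀ i, (P i).Nonempty) ∧ (∀ i j, i ≠ j → Disjoint (P i) (P j)) ∧
    Finset.univ.biUnion P = V

/-- `E` is a `d`-blocking set on `V`: a family of `d`-element subsets of `V` such that every
`d`-partition of `V` has a member of `E` meeting all parts. -/
def IsBlockingSet {α : Type*} [DecidableEq α] (d : ℕ) (V : Finset α)
    (E : Finset (Finset α)) : Prop :=
  (∀ e ∈ E, e ⊆ V ∧ e.card = d) ∧
  ∀ P : Fin d → Finset α, IsDPartition d V P → ∃ e ∈ E, ∀ i, (e ∩ P i).Nonempty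

/-- `phi d n` is the minimum size of a `d`-blocking set on an `n`-element set. -/
noncomputable def phi (d n : ℕ) : ℕ :=
  sInf { m | ∃ E : Finset (Finset (Fin n)),
    IsBlockingSet d Finset.univ E ∧ E.card = m }

open Finset

section Partition

variable {α β : Type*} [DecidableEq α] {d : ℕ} {V : Finset α} {P : Fin d → Finset α}

theorem IsDPartition.subset (hP : IsDPartition d V P) (i : Fin d) : P i ⊆ V :=
  hP.2.2 ▸ subset_biUnion_of_mem P (mem_univ i)

theorem IsDPartition.exists_mem (hP : IsDPartition d V P) {x : α} (hx : x ∈ V) :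
    ∃ i, x ∈ P i := by
  rw [← hP.2.2] at hx
  simpa using hx

theorem IsDPartition.eq_of_mem (hP : IsDPartition d V P) {x : α} {i j : Fin d}
    (hi : x ∈ P i) (hj : x ∈ P j) : i = j := by
  by_contra hij
  exact disjoint_left.1 (hP.2.1 i j hij) hi hj

theorem IsDPartition.comap [DecidableEq β] (f : α ↪ β) {P : Fin d → Finset β}
    (hP : IsDPartition d (V.map f) P) :
    IsDPartition d V (fun i => (P i).preimage f f.injective.injOn) := by
  refine ⟨fun i => ?_, fun i j hij => ?_, ?_⟩
  · obtain ⟨y, hy⟩ := hP.1 i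
    obtain ⟨x, -, rfl⟩ := mem_map.1 (hP.subset i hy)
    exact ⟨x, mem_preimage.2 hy⟩
  · exact disjoint_left.2 fun x hxi hxj =>
      hij (hP.eq_of_mem (mem_preimage.1 hxi) (mem_preimage.1 hxj))
  · ext x
    simp only [mem_biUnion, mem_univ, true_and, mem_preimage]
    refine ⟨fun ⟨i, hi⟩ => ?_, fun hx => hP.exists_mem (mem_map_of_mem f hx)⟩
    obtain ⟨y, hy, hyx⟩ := mem_map.1 (hP.subset i hi)
    exact f.injective hyx ▸ hy

theorem IsDPartition.erase (hP : IsDPartition d V P) (v : α)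
    (hne : ∀ i, ((P i).erase v).Nonempty) :
    IsDPartition d (V.erase v) (fun i => (P i).erase v) := by
  refine ⟨hne, fun i j hij => ?_, ?_⟩
  · exact disjoint_of_subset_left (erase_subset v _)
      (disjoint_of_subset_right (erase_subset v _) (hP.2.1 i j hij))
  · rw [← hP.2.2, erase_biUnion]

theorem IsDPartition.succAbove_of_eq_singleton {P : Fin (d + 1) → Finset α}
    (hP : IsDPartition (d + 1) V P) {i : Fin (d + 1)} {v : α} (hi : P i = {v}) :
    IsDPartition d (V.erase v) (fun j => P (i.succAbove j)) := by
  refine ⟨fun j => hP.1 _, fun j k hjk => hP.2.1 _ _ (Fin.succAbove_right_injective.ne hjk), ?_⟩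
  ext x
  simp only [mem_biUnion, mem_univ, true_and, mem_erase]
  constructor
  · rintro ⟨j, hj⟩
    refine ⟨fun hxv => Fin.succAbove_ne i j (hP.eq_of_mem hj ?_), hP.subset _ hj⟩
    rw [hi, hxv]
    exact mem_singleton_self v
  · rintro ⟨hxv, hx⟩
    obtain ⟨k, hk⟩ := hP.exists_mem hx
    have hki : k ≠ i := by
      rintro rfl
      exact hxv (mem_singleton.1 (hi ▸ hk))
    obtain ⟨j, rfl⟩ := Fin.exists_succAbove_eq hki
    exact ⟨j, hk⟩

end Partition

section Blocking

variable {α β : Type*} [DecidableEq α] {d : ℕ} {V : Finset α} {E : Finset (Finset α)}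

theorem isBlockingSet_powersetCard (d : ℕ) (V : Finset α) :
    IsBlockingSet d V (V.powersetCard d) := by
  refine ⟨fun e he => mem_powersetCard.1 he, fun P hP => ?_⟩
  choose x hx using hP.1
  have hx_inj : Function.Injective x := fun i j hij => hP.eq_of_mem (hx i) (hij ▸ hx j)
  refine ⟨univ.image x, mem_powersetCard.2 ⟨?_, ?_⟩, fun i => ⟨x i, ?_⟩⟩
  · exact image_subset_iff.2 fun i _ => hP.subset i (hx i)
  · rw [card_image_of_injective _ hx_inj, card_univ, Fintype.card_fin]
  · exact mem_inter.2 ⟨mem_image_of_mem x (mem_univ i), hx i⟩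

theorem IsBlockingSet.map [DecidableEq β] (f : α ↪ β) (hE : IsBlockingSet d V E) :
    IsBlockingSet d (V.map f) (E.image (map f)) := by
  refine ⟨fun e' he' => ?_, fun P hP => ?_⟩
  · obtain ⟨e, he, rfl⟩ := mem_image.1 he'
    exact ⟨map_subset_map.2 (hE.1 e he).1, (card_map f).trans (hE.1 e he).2⟩
  · obtain ⟨e, he, hmeet⟩ := hE.2 _ (hP.comap f)
    refine ⟨e.map f, mem_image_of_mem _ he, fun i => ?_⟩
    obtain ⟨x, hx⟩ := hmeet i
    rw [mem_inter, mem_preimage] at hx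
    exact ⟨f x, mem_inter.2 ⟨mem_map_of_mem f hx.1, hx.2⟩⟩

theorem IsBlockingSet.image_insert_union {v : α} (hv : v ∉ V) {E₁ E₂ : Finset (Finset α)}
    (hE₁ : IsBlockingSet d V E₁) (hE₂ : IsBlockingSet (d + 1) V E₂) :
    IsBlockingSet (d + 1) (insert v V) (E₁.image (insert v) ∪ E₂) := by
  refine ⟨fun e he => ?_, fun P hP => ?_⟩
  · rcases mem_union.1 he with he | he
    · obtain ⟨e, he₁, rfl⟩ := mem_image.1 he
      obtain ⟨heV, hcard⟩ := hE₁.1 e he₁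
      exact ⟨insert_subset_insert v heV, hcard ▸ card_insert_of_notMem fun h => hv (heV h)⟩
    · obtain ⟨heV, hcard⟩ := hE₂.1 e he
      exact ⟨heV.trans (subset_insert v V), hcard⟩
  obtain ⟨i, hvi⟩ := hP.exists_mem (mem_insert_self v V)
  rcases (hP.1 i).exists_eq_singleton_or_nontrivial with ⟨w, hw⟩ | hnontriv
  · obtain rfl : v = w := mem_singleton.1 (hw ▸ hvi)
    have hQ := hP.succAbove_of_eq_singleton hw
    rw [erase_insert hv] at hQ
    obtain ⟨e, he, hmeet⟩ := hE₁.2 _ hQ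
    refine ⟨insert v e, mem_union_left _ (mem_image_of_mem _ he), fun k => ?_⟩
    by_cases hki : k = i
    · exact ⟨v, mem_inter.2 ⟨mem_insert_self v e, hki ▸ hvi⟩⟩
    · obtain ⟨j, rfl⟩ := Fin.exists_succAbove_eq hki
      exact (hmeet j).mono (inter_subset_inter_right (subset_insert v e))
  · have hne : ∀ k, ((P k).erase v).Nonempty := fun k => by
      by_cases hki : k = i
      · exact hki ▸ (erase_nonempty hvi).2 hnontriv
      · rw [erase_eq_of_notMem fun hvk => hki (hP.eq_of_mem hvk hvi)]
        exact hP.1 k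
    have hQ := hP.erase v hne
    rw [erase_insert hv] at hQ
    obtain ⟨e, he, hmeet⟩ := hE₂.2 _ hQ
    exact ⟨e, mem_union_right _ he, fun k =>
      (hmeet k).mono (inter_subset_inter_left (erase_subset v _))⟩

end Blocking

theorem exists_isBlockingSet_card_eq_phi (d n : ℕ) :
    ∃ E : Finset (Finset (Fin n)), IsBlockingSet d univ E ∧ E.card = phi d n :=
  Nat.sInf_mem (s := {m | ∃ E : Finset (Finset (Fin n)), IsBlockingSet d univ E ∧ E.card = m})
    ⟨_, _, isBlockingSet_powersetCard d univ, rfl⟩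

theorem phi_le_card {d n : ℕ} {E : Finset (Finset (Fin n))} (hE : IsBlockingSet d univ E) :
    phi d n ≤ E.card :=
  Nat.sInf_le ⟨E, hE, rfl⟩

theorem phi_succ_succ_le (d n : ℕ) : phi (d + 1) (n + 1) ≤ phi d n + phi (d + 1) n := by
  obtain ⟨E₁, hE₁, hcard₁⟩ := exists_isBlockingSet_card_eq_phi d n
  obtain ⟨E₂, hE₂, hcard₂⟩ := exists_isBlockingSet_card_eq_phi (d + 1) n
  let f := (Fin.last n).succAboveEmb
  have hv : Fin.last n ∉ univ.map f := by simp [f]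
  have huniv : (univ : Finset (Fin (n + 1))) = insert (Fin.last n) (univ.map f) := by
    rw [Fin.univ_succAbove n (Fin.last n), cons_eq_insert]
  have hE := (hE₁.map f).image_insert_union hv (hE₂.map f)
  rw [← huniv] at hE
  calc phi (d + 1) (n + 1)
      ≤ ((E₁.image (map f)).image (insert (Fin.last n)) ∪ E₂.image (map f)).card :=
        phi_le_card hE
    _ ≤ E₁.card + E₂.card :=
      (card_union_le _ _).trans (add_le_add (card_image_le.trans card_image_le) card_image_le)
    _ = phi d n + phi (d + 1) n := by rw [hcard₁, hcard₂]

theorem phi_point_recurrence (d n : ℕ) (hd : 2 ≤ d) (hn : d < n) :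
    phi d n ≤ phi (d - 1) (n - 1) + phi d (n - 1) := by
  obtain ⟨d, rfl⟩ : ∃ d', d = d' + 1 := ⟨d - 1, by omega⟩
  obtain ⟨n, rfl⟩ : ∃ n', n = n' + 1 := ⟨n - 1, by omega⟩
  exact phi_succ_succ_le d n
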